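/- arXiv:2002.06117 — 5 statements merged into one kernel-verified Lean document; each statement's English description precedes it below -/
import Mathlib

section
/- Let P and Q be Borel probability measures on ℝ^d with finite first moments. Then for every coupling π of P and Q, |ε_P − ε_Q| ≤ 2 ∫ ‖x − y‖ dπ(x,y); consequently |ε_P − ε_Q| ≤ 2 d_W(P,Q), where d_W(P,Q) denotes the infimum of ∫ ‖x − y‖ dπ(x,y) over all couplings π of P and Q. -/
open MeasureTheory
open scoped ENNReal RealInnerProductSpace

noncomputable section

/-- Euclidean space `ℝ^d`. -/
abbrev Euc (d : ℕ) := EuclideanSpace ℝ (Fin d)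

/-- The mean `μ_P` of a measure on `ℝ^d`. -/
def meanVec (d : ℕ) (P : Measure (Euc d)) : Euc d := ∫ x, x ∂P

/-- `ε_P`: the infimum over unit vectors `u` of `∫ |⟨u, x − μ_P⟩| dP`. -/
def epsMin (d : ℕ) (P : Measure (Euc d)) : ℝ :=
  ⨅ u : {u : Euc d // ‖u‖ = 1}, ∫ x, |⟪(u : Euc d), x - meanVec d P⟫| ∂P

/-- Membership in the class `𝒫_d`: Borel probability measures with finite first
moment giving mass `< 1` to every affine hyperplane. -/
def MemP (d : ℕ) (P : Measure (Euc d)) : Prop :=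
  IsProbabilityMeasure P ∧ Integrable (fun x : Euc d => ‖x‖) P ∧
    ∀ u : Euc d, u ≠ 0 → ∀ c : ℝ, P {x : Euc d | ⟪u, x⟫ = c} < 1

/-- Membership in the class `ℱ_d` of upper semi-continuous log-concave densities. -/
def MemF (d : ℕ) (f : Euc d → ℝ) : Prop :=
  UpperSemicontinuous f ∧ (∀ x, 0 ≤ f x) ∧ (∫ x, f x = 1) ∧
    ∀ x y : Euc d, ∀ t : ℝ, 0 ≤ t → t ≤ 1 →
      f x ^ (1 - t) * f y ^ t ≤ f ((1 - t) • x + t • y)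

/-- Positive part of `log t`, as an extended nonneg real (with `log 0 = −∞` having
positive part `0`). -/
def logPosPart (t : ℝ) : ℝ≥0∞ := ENNReal.ofReal (Real.log t)

/-- Negative part of `log t`, as an extended nonneg real, with `log 0 = −∞`. -/
def logNegPart (t : ℝ) : ℝ≥0∞ := if t = 0 then ⊤ else ENNReal.ofReal (-(Real.log t))

/-- The integral `∫ log f dP`, valued in `[−∞,∞]`. -/
def eLogInt (d : ℕ) (P : Measure (Euc d)) (f : Euc d → ℝ) : EReal :=
  ((∫⁻ x, logPosPart (f x) ∂P : ℝ≥0∞) : EReal) - ((∫⁻ x, logNegPart (f x) ∂P : ℝ≥0∞) : EReal)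

/-- `f` is a log-concave projection of `P`. -/
def IsLCP (d : ℕ) (P : Measure (Euc d)) (f : Euc d → ℝ) : Prop :=
  MemF d f ∧ ∀ g : Euc d → ℝ, MemF d g → eLogInt d P g ≤ eLogInt d P f

/-- Squared Hellinger distance between densities on `ℝ^d`. -/
def dH2 (d : ℕ) (f g : Euc d → ℝ) : ℝ := ∫ x, (Real.sqrt (f x) - Real.sqrt (g x)) ^ 2

/-- Hellinger distance. -/
def dH (d : ℕ) (f g : Euc d → ℝ) : ℝ := Real.sqrt (dH2 d f g)

/-- `π` is a coupling of `P` and `Q`. -/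
def IsCoupling (d : ℕ) (π : Measure (Euc d × Euc d)) (P Q : Measure (Euc d)) : Prop :=
  IsProbabilityMeasure π ∧ π.map Prod.fst = P ∧ π.map Prod.snd = Q

/-- The empirical distribution of the points `X 0, …, X (n−1)`. -/
def empDist (d n : ℕ) (X : Fin n → Euc d) : Measure (Euc d) :=
  ((n : ℝ≥0∞))⁻¹ • ∑ i : Fin n, Measure.dirac (X i)

/-- The `L¹`-Wasserstein distance, as an infimum over couplings. -/
def wassersteinDist (d : ℕ) (P Q : Measure (Euc d)) : ℝ :=
  sInf {r : ℝ | ∃ π : Measure (Euc d × Euc d), IsCoupling d π P Q ∧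
    r = ∫ p : Euc d × Euc d, ‖p.1 - p.2‖ ∂π}

/- For a coupling `π`, the integrals of a 1-Lipschitz function under `P` and `Q` differ by at
most `W = ∫ ‖x - y‖ dπ`. Applied to the identity this moves the mean by at most `W`; applied to
`x ↦ |⟪u, x - μ_Q⟫|` it costs another `W`. So for each unit `u` the `P`-integrand exceeds the
`Q`-integrand by at most `2W`, and this passes to the infimum over `u`. -/

theorem LipschitzWith.integrable_of_integrable_norm {α E : Type*} [MeasurableSpace α]
    [NormedAddCommGroup α] [OpensMeasurableSpace α] [NormedAddCommGroup E]
    [SecondCountableTopologyEither α E] {μ : Measure α} [IsFiniteMeasure μ] {f : α → E}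
    {K : NNReal}
    (hf : LipschitzWith K f) (hμ : Integrable (fun x => ‖x‖) μ) : Integrable f μ := by
  refine ((integrable_const ‖f 0‖).add (hμ.const_mul K)).mono'
    hf.continuous.aestronglyMeasurable (Filter.Eventually.of_forall fun x => ?_)
  calc ‖f x‖ ≤ ‖f 0‖ + ‖f x - f 0‖ := norm_le_insert' _ _
    _ ≤ ‖f 0‖ + K * ‖x - 0‖ := by gcongr; exact hf.norm_sub_le x 0
    _ = ‖f 0‖ + K * ‖x‖ := by rw [sub_zero]

theorem Real.iInf_le_iInf_add {ι : Type*} {f g : ι → ℝ} {c : ℝ} (hf : BddBelow (Set.range f))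
    (hc : 0 ≤ c) (h : ∀ i, f i ≤ g i + c) : ⨅ i, f i ≤ (⨅ i, g i) + c := by
  cases isEmpty_or_nonempty ι
  · simpa using hc
  · rw [← sub_le_iff_le_add]
    exact le_ciInf fun i => sub_le_iff_le_add.2 ((ciInf_le hf i).trans (h i))

theorem lipschitzWith_abs_inner_sub {E : Type*} [NormedAddCommGroup E] [InnerProductSpace ℝ E]
    {u : E} (hu : ‖u‖ = 1) (m : E) : LipschitzWith 1 fun x : E => |⟪u, x - m⟫| := by
  refine LipschitzWith.of_dist_le_mul fun x y => ?_
  calc dist |⟪u, x - m⟫| |⟪u, y - m⟫| ≤ |⟪u, x - m⟫ - ⟪u, y - m⟫| :=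
        abs_abs_sub_abs_le_abs_sub _ _
    _ = |⟪u, x - y⟫| := by rw [← inner_sub_right, sub_sub_sub_cancel_right]
    _ ≤ ‖u‖ * ‖x - y‖ := abs_real_inner_le_norm _ _
    _ = (1 : NNReal) * dist x y := by rw [hu, dist_eq_norm, NNReal.coe_one]

theorem integral_norm_sub_map_swap {E : Type*} [NormedAddCommGroup E] [MeasurableSpace E]
    (π : Measure (E × E)) :
    ∫ p : E × E, ‖p.1 - p.2‖ ∂(π.map Prod.swap) = ∫ p : E × E, ‖p.1 - p.2‖ ∂π := by
  rw [show (Prod.swap : E × E → E × E) = MeasurableEquiv.prodComm from rfl,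
    integral_map_equiv]
  exact integral_congr_ae (Filter.Eventually.of_forall fun p => norm_sub_rev _ _)

namespace IsCoupling

variable {d : ℕ} {π : Measure (Euc d × Euc d)} {P Q : Measure (Euc d)}

theorem swap (hπ : IsCoupling d π P Q) : IsCoupling d (π.map Prod.swap) Q P := by
  obtain ⟨hπ1, rfl, rfl⟩ := hπ
  exact ⟨Measure.isProbabilityMeasure_map measurable_swap.aemeasurable,
    by rw [Measure.map_map measurable_fst measurable_swap]; rfl,
    by rw [Measure.map_map measurable_snd measurable_swap]; rfl⟩

theorem prod [IsProbabilityMeasure P] [IsProbabilityMeasure Q] : IsCoupling d (P.prod Q) P Q :=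
  ⟨inferInstance, by simp, by simp⟩

theorem integrable_norm_sub (hπ : IsCoupling d π P Q) (hP : Integrable (fun x => ‖x‖) P)
    (hQ : Integrable (fun x => ‖x‖) Q) :
    Integrable (fun p : Euc d × Euc d => ‖p.1 - p.2‖) π := by
  obtain ⟨-, rfl, rfl⟩ := hπ
  exact ((hP.comp_measurable measurable_fst).add (hQ.comp_measurable measurable_snd)).mono'
    (continuous_fst.sub continuous_snd).norm.aestronglyMeasurable
    (Filter.Eventually.of_forall fun p => by simpa using norm_sub_le p.1 p.2)

/-- The easy half of Kantorovich–Rubinstein duality. -/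
theorem norm_integral_sub_integral_le {F : Type*} [NormedAddCommGroup F] [NormedSpace ℝ F]
    [SecondCountableTopology F] {f : Euc d → F} {K : NNReal} (hf : LipschitzWith K f)
    (hπ : IsCoupling d π P Q) (hP : Integrable (fun x => ‖x‖) P)
    (hQ : Integrable (fun x => ‖x‖) Q) :
    ‖∫ x, f x ∂P - ∫ x, f x ∂Q‖ ≤ K * ∫ p : Euc d × Euc d, ‖p.1 - p.2‖ ∂π := by
  have hW := hπ.integrable_norm_sub hP hQ
  obtain ⟨hπ1, rfl, rfl⟩ := hπ
  have hfP := hf.integrable_of_integrable_norm hP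
  have hfQ := hf.integrable_of_integrable_norm hQ
  rw [integral_map measurable_fst.aemeasurable hfP.1,
    integral_map measurable_snd.aemeasurable hfQ.1,
    show ∫ p, f p.1 ∂π - ∫ p, f p.2 ∂π = ∫ p, (f ∘ Prod.fst) p ∂π - ∫ p, (f ∘ Prod.snd) p ∂π
      from rfl,
    ← integral_sub (hfP.comp_measurable measurable_fst) (hfQ.comp_measurable measurable_snd),
    ← integral_const_mul]
  exact (norm_integral_le_integral_norm _).trans <| integral_mono_of_nonneg
    (Filter.Eventually.of_forall fun _ => norm_nonneg _) (hW.const_mul _)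
    (Filter.Eventually.of_forall fun p => hf.norm_sub_le p.1 p.2)

theorem norm_meanVec_sub_le (hπ : IsCoupling d π P Q) (hP : Integrable (fun x => ‖x‖) P)
    (hQ : Integrable (fun x => ‖x‖) Q) :
    ‖meanVec d P - meanVec d Q‖ ≤ ∫ p : Euc d × Euc d, ‖p.1 - p.2‖ ∂π := by
  simpa [meanVec] using hπ.norm_integral_sub_integral_le LipschitzWith.id hP hQ

theorem integral_abs_inner_sub_meanVec_le (hπ : IsCoupling d π P Q)
    (hP : Integrable (fun x => ‖x‖) P) (hQ : Integrable (fun x => ‖x‖) Q) {u : Euc d}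
    (hu : ‖u‖ = 1) :
    ∫ x, |⟪u, x - meanVec d P⟫| ∂P ≤
      ∫ x, |⟪u, x - meanVec d Q⟫| ∂Q + 2 * ∫ p : Euc d × Euc d, ‖p.1 - p.2‖ ∂π := by
  have : IsProbabilityMeasure P := by
    obtain ⟨hπ1, rfl, -⟩ := hπ
    exact Measure.isProbabilityMeasure_map measurable_fst.aemeasurable
  set W := ∫ p : Euc d × Euc d, ‖p.1 - p.2‖ ∂π
  have hLip := lipschitzWith_abs_inner_sub hu (meanVec d Q)
  have hmoveMean : ∀ x, |⟪u, x - meanVec d P⟫| ≤ |⟪u, x - meanVec d Q⟫| + W := fun x =>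
    calc |⟪u, x - meanVec d P⟫|
          = |⟪u, x - meanVec d Q⟫ - ⟪u, meanVec d P - meanVec d Q⟫| := by
          rw [← inner_sub_right, sub_sub_sub_cancel_right]
      _ ≤ |⟪u, x - meanVec d Q⟫| + ‖u‖ * ‖meanVec d P - meanVec d Q‖ :=
          (abs_sub _ _).trans (add_le_add_right (abs_real_inner_le_norm _ _) _)
      _ ≤ |⟪u, x - meanVec d Q⟫| + W := by
          rw [hu, one_mul]; gcongr; exact hπ.norm_meanVec_sub_le hP hQ
  have hcouple := hπ.norm_integral_sub_integral_le hLip hP hQ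
  rw [Real.norm_eq_abs, NNReal.coe_one, one_mul] at hcouple
  calc ∫ x, |⟪u, x - meanVec d P⟫| ∂P ≤ ∫ x, (|⟪u, x - meanVec d Q⟫| + W) ∂P :=
        integral_mono_of_nonneg (Filter.Eventually.of_forall fun _ => abs_nonneg _)
          ((hLip.integrable_of_integrable_norm hP).add (integrable_const W))
          (Filter.Eventually.of_forall hmoveMean)
    _ = ∫ x, |⟪u, x - meanVec d Q⟫| ∂P + W := by
        rw [integral_add (hLip.integrable_of_integrable_norm hP) (integrable_const W)]; simp
    _ ≤ ∫ x, |⟪u, x - meanVec d Q⟫| ∂Q + 2 * W := by linarith [(abs_le.1 hcouple).2]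

theorem epsMin_le_add (hπ : IsCoupling d π P Q) (hP : Integrable (fun x => ‖x‖) P)
    (hQ : Integrable (fun x => ‖x‖) Q) :
    epsMin d P ≤ epsMin d Q + 2 * ∫ p : Euc d × Euc d, ‖p.1 - p.2‖ ∂π :=
  Real.iInf_le_iInf_add
    ⟨0, Set.forall_mem_range.2 fun _ => integral_nonneg fun _ => abs_nonneg _⟩
    (mul_nonneg zero_le_two (integral_nonneg fun _ => norm_nonneg _))
    fun u => hπ.integral_abs_inner_sub_meanVec_le hP hQ u.2

theorem abs_epsMin_sub_le (hπ : IsCoupling d π P Q) (hP : Integrable (fun x => ‖x‖) P)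
    (hQ : Integrable (fun x => ‖x‖) Q) :
    |epsMin d P - epsMin d Q| ≤ 2 * ∫ p : Euc d × Euc d, ‖p.1 - p.2‖ ∂π := by
  have hQP := hπ.swap.epsMin_le_add hQ hP
  rw [integral_norm_sub_map_swap] at hQP
  exact abs_sub_le_iff.2 ⟨by linarith [hπ.epsMin_le_add hP hQ], by linarith⟩

end IsCoupling

/-- `|ε_P − ε_Q| ≤ 2 ∫‖x−y‖ dπ` for every coupling `π`, and
consequently `|ε_P − ε_Q| ≤ 2 d_W(P,Q)`. -/
theorem stmt1 (d : ℕ) (P Q : Measure (Euc d))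
    (hP1 : IsProbabilityMeasure P) (hQ1 : IsProbabilityMeasure Q)
    (hP2 : Integrable (fun x : Euc d => ‖x‖) P)
    (hQ2 : Integrable (fun x : Euc d => ‖x‖) Q) :
    (∀ π : Measure (Euc d × Euc d), IsCoupling d π P Q →
      |epsMin d P - epsMin d Q| ≤ 2 * ∫ p : Euc d × Euc d, ‖p.1 - p.2‖ ∂π) ∧
    |epsMin d P - epsMin d Q| ≤ 2 * wassersteinDist d P Q := by
  have hcoupling := fun π (hπ : IsCoupling d π P Q) => hπ.abs_epsMin_sub_le hP2 hQ2
  refine ⟨hcoupling, ?_⟩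
  have : |epsMin d P - epsMin d Q| / 2 ≤ wassersteinDist d P Q :=
    le_csInf ⟨_, P.prod Q, IsCoupling.prod, rfl⟩ fun r ⟨π, hπ, hr⟩ => by
      linarith [hcoupling π hπ]
  linarith

end
end

section
/- Let q > 1 and let P ∈ 𝒫_1 satisfy M_q := (∫ |x|^q dP(x))^{1/q} < ∞. Then min{ P((μ_P, ∞)), P((−∞, μ_P)) } ≥ (ε_P / (4 M_q))^{q/(q−1)}. -/
/-!
Centre at the mean `m`. Since `∫ (x - m) dP = 0`, each open tail carries half of the absolute
deviation: `∫_{x > m} |x - m| dP = ∫_{x < m} |x - m| dP = ε_P / 2`. On a tail `A`, Hölder's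
inequality against the indicator of `A` gives `∫_A |x| dP ≤ M_q P(A)^(1 - 1/q)`, and `|m| ≤ M_q`,
so `ε_P / 2 ≤ M_q P(A)^(1 - 1/q) + M_q P(A) ≤ 2 M_q P(A)^(1 - 1/q)`; solving for `P(A)` gives the
bound.
-/

open MeasureTheory
open scoped ENNReal

noncomputable section

/-- The mean `μ_P` of a measure on `ℝ`. -/
def meanR (P : Measure ℝ) : ℝ := ∫ x, x ∂P

/-- `ε_P = ∫ |x − μ_P| dP` for a measure on `ℝ`. -/
def epsR (P : Measure ℝ) : ℝ := ∫ x, |x - meanR P| ∂P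

/-- Membership in `𝒫₁`: Borel probability measures on `ℝ` with finite first
moment that are not a point mass. -/
def MemP1 (P : Measure ℝ) : Prop :=
  IsProbabilityMeasure P ∧ Integrable (fun x : ℝ => |x|) P ∧ ∀ x : ℝ, P {x} < 1

/-- Membership in `ℱ₁`, the upper semi-continuous log-concave densities on `ℝ`. -/
def MemF1 (f : ℝ → ℝ) : Prop :=
  UpperSemicontinuous f ∧ (∀ x, 0 ≤ f x) ∧ (∫ x, f x = 1) ∧
    ∀ x y t : ℝ, 0 ≤ t → t ≤ 1 → f x ^ (1 - t) * f y ^ t ≤ f ((1 - t) * x + t * y)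

/-- The integral `∫ log f dP`, valued in `[−∞,∞]`. -/
def eLogInt1 (P : Measure ℝ) (f : ℝ → ℝ) : EReal :=
  ((∫⁻ x, logPosPart (f x) ∂P : ℝ≥0∞) : EReal) - ((∫⁻ x, logNegPart (f x) ∂P : ℝ≥0∞) : EReal)

/-- `f` is a log-concave projection of `P` (on `ℝ`). -/
def IsLCP1 (P : Measure ℝ) (f : ℝ → ℝ) : Prop :=
  MemF1 f ∧ ∀ g : ℝ → ℝ, MemF1 g → eLogInt1 P g ≤ eLogInt1 P f

/-- Squared Hellinger distance between densities on `ℝ`. -/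
def dH2R (f g : ℝ → ℝ) : ℝ := ∫ x, (Real.sqrt (f x) - Real.sqrt (g x)) ^ 2

/-- The CDF-type discrepancy `Δ_CDF(P,Q)`. -/
def DeltaCDF (P Q : Measure ℝ) : ℝ :=
  max (⨆ t : ℝ, |Real.sqrt (P (Set.Ioi t)).toReal - Real.sqrt (Q (Set.Ioi t)).toReal|)
      (⨆ t : ℝ, |Real.sqrt (P (Set.Iio t)).toReal - Real.sqrt (Q (Set.Iio t)).toReal|)

section Lemmas

variable {α : Type*} [MeasurableSpace α] {μ : Measure α}

theorem setIntegral_pos_abs_eq_half {f : α → ℝ} (hf : Integrable f μ) (h0 : ∫ x, f x ∂μ = 0) :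
    ∫ x in {x | 0 < f x}, |f x| ∂μ = (∫ x, |f x| ∂μ) / 2 := by
  set s := {x | 0 < f x}
  have hs : NullMeasurableSet s μ := aestronglyMeasurable_const.nullMeasurableSet_lt hf.1
  have hind : Integrable (s.indicator fun x => |f x|) μ := hf.abs.indicator₀ hs
  have habs : ∀ x, |f x| = 2 * s.indicator (fun x => |f x|) x - f x := by
    intro x
    by_cases h : 0 < f x
    · rw [Set.indicator_of_mem (show x ∈ s from h), abs_of_pos h]; ring
    · rw [Set.indicator_of_notMem (show x ∉ s from h), abs_of_nonpos (not_lt.1 h)]; ring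
  rw [← integral_indicator₀ hs, integral_congr_ae (Filter.Eventually.of_forall habs),
    integral_sub (hind.const_mul 2) hf, integral_const_mul, h0]
  ring

theorem setIntegral_neg_abs_eq_half {f : α → ℝ} (hf : Integrable f μ) (h0 : ∫ x, f x ∂μ = 0) :
    ∫ x in {x | f x < 0}, |f x| ∂μ = (∫ x, |f x| ∂μ) / 2 := by
  simpa using
    setIntegral_pos_abs_eq_half hf.neg (by simp only [Pi.neg_apply, integral_neg, h0, neg_zero])

theorem setIntegral_abs_le_mul_measureReal_rpow {p q : ℝ} (hpq : p.HolderConjugate q)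
    {f : α → ℝ} (hf : AEStronglyMeasurable f μ) (hfp : Integrable (fun x => |f x| ^ p) μ)
    {s : Set α} (hs : MeasurableSet s) (hμs : μ s ≠ ∞) :
    ∫ x in s, |f x| ∂μ ≤ (∫ x, |f x| ^ p ∂μ) ^ (1 / p) * μ.real s ^ (1 / q) := by
  have hf_memLp : MemLp f (ENNReal.ofReal p) μ := by
    rw [← integrable_norm_rpow_iff hf (by simpa using hpq.pos) ENNReal.ofReal_ne_top]
    simpa [ENNReal.toReal_ofReal hpq.nonneg] using hfp
  have hind_memLp : MemLp (s.indicator fun _ => (1 : ℝ)) (ENNReal.ofReal q) μ :=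
    memLp_indicator_const _ hs 1 (Or.inr hμs)
  have holder := integral_mul_le_Lp_mul_Lq_of_nonneg hpq
    (Filter.Eventually.of_forall fun x => abs_nonneg (f x))
    (Filter.Eventually.of_forall fun x => Set.indicator_nonneg (fun _ _ => zero_le_one) x)
    hf_memLp.abs hind_memLp
  have hlhs : ∫ x, |f x| * s.indicator (fun _ => (1 : ℝ)) x ∂μ = ∫ x in s, |f x| ∂μ := by
    rw [← integral_indicator hs]
    congr 1 with x
    by_cases hx : x ∈ s <;> simp [hx]
  have hrhs : ∫ x, s.indicator (fun _ => (1 : ℝ)) x ^ q ∂μ = μ.real s := by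
    rw [← integral_indicator_one hs]
    congr 1 with x
    by_cases hx : x ∈ s <;> simp [hx, hpq.symm.ne_zero]
  rwa [hlhs, hrhs] at holder

theorem abs_integral_le_rpow_integral_abs_rpow [IsProbabilityMeasure μ] {p : ℝ} (hp : 1 < p)
    {f : α → ℝ} (hf : Integrable f μ) (hfp : Integrable (fun x => |f x| ^ p) μ) :
    |∫ x, f x ∂μ| ≤ (∫ x, |f x| ^ p ∂μ) ^ (1 / p) := by
  have hpq : p.HolderConjugate (p / (p - 1)) := (Real.holderConjugate_iff_eq_conjExponent hp).2 rfl
  calc |∫ x, f x ∂μ| ≤ ∫ x, |f x| ∂μ := abs_integral_le_integral_abs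
    _ = ∫ x in Set.univ, |f x| ∂μ := setIntegral_univ.symm
    _ ≤ (∫ x, |f x| ^ p ∂μ) ^ (1 / p) * μ.real Set.univ ^ (1 / (p / (p - 1))) :=
      setIntegral_abs_le_mul_measureReal_rpow hpq hf.1 hfp MeasurableSet.univ (measure_ne_top _ _)
    _ = (∫ x, |f x| ^ p ∂μ) ^ (1 / p) := by simp

theorem setIntegral_abs_sub_le_two_mul_rpow [IsProbabilityMeasure μ] {p q : ℝ}
    (hpq : p.HolderConjugate q) {f : α → ℝ} (hf : Integrable f μ)
    (hfp : Integrable (fun x => |f x| ^ p) μ) {c : ℝ} (hc : |c| ≤ (∫ x, |f x| ^ p ∂μ) ^ (1 / p))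
    {s : Set α} (hs : MeasurableSet s) :
    ∫ x in s, |f x - c| ∂μ ≤ 2 * (∫ x, |f x| ^ p ∂μ) ^ (1 / p) * μ.real s ^ (1 / q) := by
  set M := (∫ x, |f x| ^ p ∂μ) ^ (1 / p)
  have hM : 0 ≤ M := (abs_nonneg c).trans hc
  have hμs : μ.real s ≤ μ.real s ^ (1 / q) :=
    Real.self_le_rpow_of_le_one measureReal_nonneg measureReal_le_one
      (div_le_one_of_le₀ hpq.symm.lt.le hpq.symm.nonneg)
  calc ∫ x in s, |f x - c| ∂μ ≤ ∫ x in s, (|f x| + |c|) ∂μ :=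
        setIntegral_mono (hf.sub (integrable_const c)).abs.integrableOn
          (hf.abs.add (integrable_const _)).integrableOn fun x => abs_sub _ _
    _ = ∫ x in s, |f x| ∂μ + |c| * μ.real s := by
        rw [integral_add hf.abs.integrableOn (integrable_const _).integrableOn, setIntegral_const,
          smul_eq_mul, mul_comm]
    _ ≤ M * μ.real s ^ (1 / q) + M * μ.real s ^ (1 / q) :=
        add_le_add (setIntegral_abs_le_mul_measureReal_rpow hpq hf.1 hfp hs (measure_ne_top _ _))
          (mul_le_mul hc hμs measureReal_nonneg hM)
    _ = 2 * M * μ.real s ^ (1 / q) := by ring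

theorem rpow_le_measureReal_of_le_setIntegral_abs_sub [IsProbabilityMeasure μ] {p q : ℝ}
    (hpq : p.HolderConjugate q) {f : α → ℝ} (hf : Integrable f μ)
    (hfp : Integrable (fun x => |f x| ^ p) μ) {c : ℝ} (hc : |c| ≤ (∫ x, |f x| ^ p ∂μ) ^ (1 / p))
    {s : Set α} (hs : MeasurableSet s) {ε : ℝ} (hε : 0 ≤ ε)
    (hs_mass : ε / 2 ≤ ∫ x in s, |f x - c| ∂μ) :
    (ε / (4 * (∫ x, |f x| ^ p ∂μ) ^ (1 / p))) ^ q ≤ μ.real s := by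
  have htail := setIntegral_abs_sub_le_two_mul_rpow hpq hf hfp hc hs
  have hM : 0 ≤ (∫ x, |f x| ^ p ∂μ) ^ (1 / p) := (abs_nonneg c).trans hc
  refine (Real.le_rpow_inv_iff_of_pos (by positivity) measureReal_nonneg hpq.symm.pos).1 ?_
  rw [← one_div]
  exact div_le_of_le_mul₀ (by positivity) (by positivity) (by linarith)

end Lemmas

/-- lower bound on the mass above and below the mean. -/
theorem stmt14 (q : ℝ) (hq : 1 < q) (P : Measure ℝ) (hP : MemP1 P)
    (hint : Integrable (fun x : ℝ => |x| ^ q) P) :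
    (epsR P / (4 * (∫ x, |x| ^ q ∂P) ^ (1 / q))) ^ (q / (q - 1)) ≤
      min (P (Set.Ioi (meanR P))).toReal (P (Set.Iio (meanR P))).toReal := by
  obtain ⟨hprob, habs, -⟩ := hP
  have hid : Integrable (fun x : ℝ => x) P := (integrable_norm_iff aestronglyMeasurable_id).1 habs
  have hqq' : q.HolderConjugate (q / (q - 1)) := (Real.holderConjugate_iff_eq_conjExponent hq).2 rfl
  set m := meanR P
  have hm : |m| ≤ (∫ x, |x| ^ q ∂P) ^ (1 / q) := abs_integral_le_rpow_integral_abs_rpow hq hid hint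
  have hε : 0 ≤ epsR P := integral_nonneg fun _ => abs_nonneg _
  have hcent_int : Integrable (fun x => x - m) P := hid.sub (integrable_const m)
  have hcentered : ∫ x, (x - m) ∂P = 0 := by
    rw [integral_sub hid (integrable_const m), integral_const, probReal_univ, one_smul]
    exact sub_self m
  have hupper := setIntegral_pos_abs_eq_half hcent_int hcentered
  have hlower := setIntegral_neg_abs_eq_half hcent_int hcentered
  simp only [sub_pos, sub_neg] at hupper hlower
  exact le_min
    (rpow_le_measureReal_of_le_setIntegral_abs_sub hqq' hid hint hm measurableSet_Ioi hε hupper.ge)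
    (rpow_le_measureReal_of_le_setIntegral_abs_sub hqq' hid hint hm measurableSet_Iio hε hlower.ge)

end
end

section
/- Let φ ∈ Φ_d and L > 0. Then there exists a Borel measurable map Y : ℝ^d → ℝ^d such that for every x ∈ ℝ^d, φ(Y(x)) − L‖x − Y(x)‖ = sup_{y ∈ ℝ^d} (φ(y) − L‖x − y‖); in particular, for every x the supremum is attained. -/
open MeasureTheory
open scoped ENNReal

noncomputable section

/-- Membership in `Φ_d`: functions `φ : ℝ^d → [−∞,∞)` that are proper, concave,
upper semi-continuous, and tend to `−∞` at infinity. -/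
def MemPhi (d : ℕ) (φ : Euc d → EReal) : Prop :=
  (∀ x, φ x ≠ ⊤) ∧ (∃ x, φ x ≠ ⊥) ∧ UpperSemicontinuous φ ∧
    Filter.Tendsto φ (Filter.cocompact (Euc d)) (nhds ⊥) ∧
    ∀ x y : Euc d, ∀ t : ℝ, 0 ≤ t → t ≤ 1 →
      ((1 - t : ℝ) : EReal) * φ x + ((t : ℝ) : EReal) * φ y ≤ φ ((1 - t) • x + t • y)

open Filter Topology Set

/-! Subtracting `ε ‖y‖²` from the objective `φ y - L ‖x - y‖` makes it strictly concave in `y`,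
so for `ε > 0` it has a unique maximizer `Y_ε x`; superlevel sets being compact and the objective
upper semicontinuous, this uniqueness forces `x ↦ Y_ε x` to be continuous. As `ε → 0`, `Y_ε x`
converges to the maximizer of least norm of the original objective: comparing the two objectives
shows `‖Y_ε x‖` never exceeds that least norm, and by concavity only one maximizer has norm this
small. A pointwise limit of continuous maps is Borel measurable. -/

theorem EReal.eq_coe_add_of_sub_coe_eq_coe {a : EReal} {r v : ℝ} (h : a - r = v) :
    a = ((v + r : ℝ) : EReal) := by
  induction a using EReal.rec
  · simp at h
  · rw [← EReal.coe_sub, EReal.coe_eq_coe_iff] at h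
    rw [← h, _root_.sub_add_cancel]
  · simp at h

section Semicontinuity

variable {α : Type*} [TopologicalSpace α]

theorem UpperSemicontinuous.exists_forall_le_of_isCompact {β : Type*} [LinearOrder β]
    {f : α → β} (hf : UpperSemicontinuous f) (a : α) (ha : IsCompact {y | f a ≤ f y}) :
    ∃ m, ∀ y, f y ≤ f m := by
  obtain ⟨m, -, hm⟩ := (hf.upperSemicontinuousOn _).exists_isMaxOn ⟨a, le_refl (f a)⟩ ha
  refine ⟨m, fun y => ?_⟩
  rcases le_total (f a) (f y) with h | h
  · exact hm h
  · exact h.trans (hm (le_refl (f a)))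

theorem UpperSemicontinuous.isCompact_superlevel_of_tendsto_bot {β : Type*} [LinearOrder β]
    [OrderBot β] [TopologicalSpace β] [OrderTopology β] {f : α → β}
    (hf : UpperSemicontinuous f) (hlim : Tendsto f (cocompact α) (𝓝 ⊥)) {c : β} (hc : ⊥ < c) :
    IsCompact {y | c ≤ f y} := by
  obtain ⟨K, hK, hKc⟩ := mem_cocompact.1 (hlim (Iio_mem_nhds hc))
  refine hK.of_isClosed_subset (hf.isClosed_preimage c) fun y hy => ?_
  by_contra hyK
  exact (hKc hyK : f y < c).not_ge hy

theorem UpperSemicontinuous.sub_coe {f : α → EReal} {g : α → ℝ} (hf : UpperSemicontinuous f)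
    (hg : Continuous g) : UpperSemicontinuous fun a => f a - (g a : EReal) := by
  simp_rw [sub_eq_add_neg, ← EReal.coe_neg]
  exact hf.add' (continuous_coe_real_ereal.comp hg.neg).upperSemicontinuous fun a =>
    EReal.continuousAt_add (Or.inr (EReal.coe_ne_bot _)) (Or.inr (EReal.coe_ne_top _))

theorem EReal.continuous_const_sub_coe (c : EReal) {g : α → ℝ} (hg : Continuous g) :
    Continuous fun a => c - (g a : EReal) := by
  simp_rw [sub_eq_add_neg, ← EReal.coe_neg]
  refine continuous_iff_continuousAt.2 fun a => ContinuousAt.comp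
    (g := fun q : EReal × EReal => q.1 + q.2) (f := fun a => (c, ((-g a : ℝ) : EReal)))
    (EReal.continuousAt_add (Or.inr (EReal.coe_ne_bot _)) (Or.inr (EReal.coe_ne_top _))) ?_
  exact (continuous_const.prodMk (continuous_coe_real_ereal.comp hg.neg)).continuousAt

end Semicontinuity

section Maximizers

variable {ι P Y : Type*} [TopologicalSpace P] [TopologicalSpace Y]

theorem forall_le_of_tendsto_of_eventually_forall_le {β : Type*} [LinearOrder β]
    [DenselyOrdered β] {F : P → Y → β} (hF : UpperSemicontinuous (Function.uncurry F))
    (hFz : ∀ z, LowerSemicontinuous (F · z)) {l : Filter ι} [l.NeBot] {p : ι → P} {y : ι → Y}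
    {p₀ : P} {y₀ : Y} (hp : Tendsto p l (𝓝 p₀)) (hy : Tendsto y l (𝓝 y₀))
    (hmax : ∀ᶠ i in l, ∀ z, F (p i) z ≤ F (p i) (y i)) (z : Y) : F p₀ z ≤ F p₀ y₀ := by
  by_contra! h
  obtain ⟨c, hy₀c, hcz⟩ := exists_between h
  have hnear : ∀ᶠ i in l, F (p i) (y i) < c := (hp.prodMk_nhds hy).eventually (hF (p₀, y₀) c hy₀c)
  have hfar : ∀ᶠ i in l, c < F (p i) z := hp.eventually (hFz z p₀ c hcz)
  obtain ⟨i, hi₁, hi₂, hi₃⟩ := (hnear.and (hfar.and hmax)).exists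
  exact (hi₂.trans_le (hi₃ z)).not_gt hi₁

theorem tendsto_of_eventually_forall_le {F : P → Y → EReal} {g : Y → EReal}
    (hg : UpperSemicontinuous g) (hglim : Tendsto g (cocompact Y) (𝓝 ⊥))
    (hF : UpperSemicontinuous (Function.uncurry F)) (hFz : ∀ z, LowerSemicontinuous (F · z))
    {l : Filter ι} {p : ι → P} {y : ι → Y} {p₀ : P} {z₀ m₀ : Y} {S : Set Y}
    (hp : Tendsto p l (𝓝 p₀)) (hz₀ : F p₀ z₀ ≠ ⊥)
    (hmax : ∀ᶠ i in l, ∀ z, F (p i) z ≤ F (p i) (y i)) (hFg : ∀ᶠ i in l, F (p i) (y i) ≤ g (y i))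
    (hS : IsClosed S) (hyS : ∀ᶠ i in l, y i ∈ S)
    (huniq : ∀ m ∈ S, (∀ z, F p₀ z ≤ F p₀ m) → m = m₀) :
    Tendsto y l (𝓝 m₀) := by
  obtain ⟨c, hc, hcz₀⟩ := exists_between (bot_lt_iff_ne_bot.2 hz₀)
  have hmem : ∀ᶠ i in l, y i ∈ {y | c ≤ g y} := by
    filter_upwards [hp.eventually (hFz z₀ p₀ c hcz₀), hmax, hFg] with i h₁ h₂ h₃
    exact (h₁.trans_le (h₂ z₀)).le.trans h₃
  refine (hg.isCompact_superlevel_of_tendsto_bot hglim hc).tendsto_nhds_of_unique_mapClusterPt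
    hmem fun m _ hm => huniq m (hS.mem_of_mapClusterPt hm hyS) ?_
  obtain ⟨U, hUl, hU⟩ := mapClusterPt_iff_ultrafilter.1 hm
  exact forall_le_of_tendsto_of_eventually_forall_le hF hFz (hp.mono_left hUl) hU
    (hmax.filter_mono hUl)

end Maximizers

section Penalized

variable {E : Type*} [NormedAddCommGroup E]

/-- `ConcaveOn` does not apply, `EReal` not being an `ℝ`-module. -/
def ConcaveEReal [Module ℝ E] (φ : E → EReal) : Prop :=
  ∀ x y : E, ∀ t : ℝ, 0 ≤ t → t ≤ 1 →
    ((1 - t : ℝ) : EReal) * φ x + ((t : ℝ) : EReal) * φ y ≤ φ ((1 - t) • x + t • y)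

theorem norm_sub_two_inv_smul_add_le [NormedSpace ℝ E] (x y z : E) :
    ‖x - (2⁻¹ : ℝ) • (y + z)‖ ≤ (‖x - y‖ + ‖x - z‖) / 2 := by
  have h : x - (2⁻¹ : ℝ) • (y + z) = (2⁻¹ : ℝ) • ((x - y) + (x - z)) := by module
  rw [h, norm_smul, Real.norm_of_nonneg (by norm_num)]
  linarith [norm_add_le (x - y) (x - z)]

theorem norm_two_inv_smul_add_sq [InnerProductSpace ℝ E] (y z : E) :
    ‖(2⁻¹ : ℝ) • (y + z)‖ ^ 2 = (‖y‖ ^ 2 + ‖z‖ ^ 2) / 2 - ‖y - z‖ ^ 2 / 4 := by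
  rw [norm_smul, Real.norm_of_nonneg (by norm_num)]
  linarith [parallelogram_law_with_norm ℝ y z]

/-- For `ε > 0` the quadratic term makes the maximizer in `y` unique; `ε = 0` gives the
objective of the theorem. -/
def penalized (φ : E → EReal) (L ε : ℝ) (x y : E) : EReal :=
  φ y - ((L * ‖x - y‖ + ε * ‖y‖ ^ 2 : ℝ) : EReal)

variable {φ : E → EReal} {L ε : ℝ} {x x₀ y m m' : E}

theorem penalized_zero : penalized φ L 0 x y = φ y - ((L * ‖x - y‖ : ℝ) : EReal) := by
  simp [penalized]

theorem penalized_of_eq_coe {a : ℝ} (h : φ y = a) :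
    penalized φ L ε x y = ((a - (L * ‖x - y‖ + ε * ‖y‖ ^ 2) : ℝ) : EReal) := by
  rw [penalized, h, EReal.coe_sub]

theorem penalized_le (hL : 0 ≤ L) (hε : 0 ≤ ε) : penalized φ L ε x y ≤ φ y := by
  have : (0 : EReal) ≤ ((L * ‖x - y‖ + ε * ‖y‖ ^ 2 : ℝ) : EReal) :=
    EReal.coe_nonneg.2 (by positivity)
  exact (EReal.sub_le_sub le_rfl this).trans_eq (sub_zero _)

theorem penalized_ne_bot_iff : penalized φ L ε x y ≠ ⊥ ↔ φ y ≠ ⊥ := by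
  unfold penalized
  generalize (L * ‖x - y‖ + ε * ‖y‖ ^ 2 : ℝ) = r
  induction φ y using EReal.rec <;> simp [← EReal.coe_sub]

theorem penalized_ne_top (h : φ y ≠ ⊤) : penalized φ L ε x y ≠ ⊤ := by
  revert h
  unfold penalized
  generalize (L * ‖x - y‖ + ε * ‖y‖ ^ 2 : ℝ) = r
  induction φ y using EReal.rec <;> simp [← EReal.coe_sub]

theorem upperSemicontinuous_penalized (hφ : UpperSemicontinuous φ) :
    UpperSemicontinuous (penalized φ L ε x) :=
  hφ.sub_coe (by fun_prop)


theorem isCompact_superlevel_penalized (hφ : UpperSemicontinuous φ)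
    (hlim : Tendsto φ (cocompact E) (𝓝 ⊥)) (hL : 0 ≤ L) (hε : 0 ≤ ε) {c : EReal} (hc : ⊥ < c) :
    IsCompact {y | c ≤ penalized φ L ε x y} :=
  (hφ.isCompact_superlevel_of_tendsto_bot hlim hc).of_isClosed_subset
    ((upperSemicontinuous_penalized hφ).isClosed_preimage c) fun _ hy =>
      le_trans hy (penalized_le hL hε)

theorem exists_forall_penalized_le (hφ : UpperSemicontinuous φ)
    (hlim : Tendsto φ (cocompact E) (𝓝 ⊥)) (hx₀ : φ x₀ ≠ ⊥) (hL : 0 ≤ L) (hε : 0 ≤ ε) (x : E) :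
    ∃ m, ∀ y, penalized φ L ε x y ≤ penalized φ L ε x m :=
  (upperSemicontinuous_penalized hφ).exists_forall_le_of_isCompact x₀ <|
    isCompact_superlevel_penalized hφ hlim hL hε <|
      bot_lt_iff_ne_bot.2 (penalized_ne_bot_iff.2 hx₀)

theorem exists_penalized_eq_coe (hTop : ∀ y, φ y ≠ ⊤) (hx₀ : φ x₀ ≠ ⊥)
    (hm : ∀ y, penalized φ L ε x y ≤ penalized φ L ε x m) : ∃ v : ℝ, penalized φ L ε x m = v :=
  ⟨_, (EReal.coe_toReal (penalized_ne_top (hTop m))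
    (ne_bot_of_le_ne_bot (penalized_ne_bot_iff.2 hx₀) (hm x₀))).symm⟩

theorem coe_add_le_penalized_two_inv_smul_add [InnerProductSpace ℝ E] (hconc : ConcaveEReal φ)
    (hL : 0 ≤ L) {v : ℝ} (hm : penalized φ L ε x m = v) (hm' : penalized φ L ε x m' = v) :
    ((v + ε * ‖m - m'‖ ^ 2 / 4 : ℝ) : EReal) ≤ penalized φ L ε x ((2⁻¹ : ℝ) • (m + m')) := by
  set P : E → ℝ := fun y => L * ‖x - y‖ + ε * ‖y‖ ^ 2
  have hφmid : (((v + P m + (v + P m')) / 2 : ℝ) : EReal) ≤ φ ((2⁻¹ : ℝ) • (m + m')) := by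
    have h := hconc m m' 2⁻¹ (by norm_num) (by norm_num)
    rw [EReal.eq_coe_add_of_sub_coe_eq_coe hm, EReal.eq_coe_add_of_sub_coe_eq_coe hm',
      ← EReal.coe_mul, ← EReal.coe_mul, ← EReal.coe_add, show (1 - 2⁻¹ : ℝ) = 2⁻¹ by norm_num, ← smul_add] at h
    refine le_of_eq_of_le (EReal.coe_eq_coe_iff.2 ?_) h
    ring
  have hP : v + ε * ‖m - m'‖ ^ 2 / 4 ≤ (v + P m + (v + P m')) / 2 - P ((2⁻¹ : ℝ) • (m + m')) := by
    have := mul_le_mul_of_nonneg_left (norm_sub_two_inv_smul_add_le x m m') hL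
    simp only [P, norm_two_inv_smul_add_sq]
    linarith
  calc ((v + ε * ‖m - m'‖ ^ 2 / 4 : ℝ) : EReal)
      ≤ (((v + P m + (v + P m')) / 2 : ℝ) : EReal) - (P ((2⁻¹ : ℝ) • (m + m')) : EReal) := by
        rw [← EReal.coe_sub]; exact EReal.coe_le_coe_iff.2 hP
    _ ≤ penalized φ L ε x ((2⁻¹ : ℝ) • (m + m')) := EReal.sub_le_sub hφmid le_rfl

end Penalized

section Selection

variable {E : Type*} [NormedAddCommGroup E] [InnerProductSpace ℝ E] {φ : E → EReal} {L ε : ℝ}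
  {x x₀ m m' w : E}

theorem eq_of_forall_penalized_le (hTop : ∀ y, φ y ≠ ⊤) (hx₀ : φ x₀ ≠ ⊥)
    (hconc : ConcaveEReal φ) (hL : 0 ≤ L) (hε : 0 < ε)
    (hm : ∀ y, penalized φ L ε x y ≤ penalized φ L ε x m)
    (hm' : ∀ y, penalized φ L ε x y ≤ penalized φ L ε x m') : m = m' := by
  obtain ⟨v, hv⟩ := exists_penalized_eq_coe hTop hx₀ hm
  have hv' : penalized φ L ε x m' = v := (le_antisymm (hm m') (hm' m)).trans hv
  have h := (coe_add_le_penalized_two_inv_smul_add hconc hL hv hv').trans (hm _)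
  rw [hv, EReal.coe_le_coe_iff] at h
  have : ‖m - m'‖ ^ 2 ≤ 0 := by nlinarith
  simpa [sub_eq_zero] using this

theorem continuous_of_forall_penalized_le (hTop : ∀ y, φ y ≠ ⊤) (hx₀ : φ x₀ ≠ ⊥)
    (hφ : UpperSemicontinuous φ) (hlim : Tendsto φ (cocompact E) (𝓝 ⊥))
    (hconc : ConcaveEReal φ) (hL : 0 ≤ L) (hε : 0 < ε) {Y : E → E}
    (hY : ∀ x y, penalized φ L ε x y ≤ penalized φ L ε x (Y x)) : Continuous Y :=
  continuous_iff_continuousAt.2 fun x =>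
    tendsto_of_eventually_forall_le (F := penalized φ L ε) hφ hlim
      ((hφ.comp continuous_snd).sub_coe (by fun_prop))
      (fun z => (EReal.continuous_const_sub_coe _ (by fun_prop)).lowerSemicontinuous)
      tendsto_id (penalized_ne_bot_iff.2 hx₀ : penalized φ L ε x x₀ ≠ ⊥)
      (Eventually.of_forall (hY ·)) (Eventually.of_forall fun _ => penalized_le hL hε.le)
      isClosed_univ (Eventually.of_forall fun _ => mem_univ _)
      fun _ _ hm => eq_of_forall_penalized_le hTop hx₀ hconc hL hε hm (hY x)

theorem exists_min_norm_maximizer (hTop : ∀ y, φ y ≠ ⊤) (hx₀ : φ x₀ ≠ ⊥)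
    (hφ : UpperSemicontinuous φ) (hlim : Tendsto φ (cocompact E) (𝓝 ⊥))
    (hconc : ConcaveEReal φ) (hL : 0 ≤ L) (x : E) :
    ∃ w, (∀ y, penalized φ L 0 x y ≤ penalized φ L 0 x w) ∧
      ∀ m, (∀ y, penalized φ L 0 x y ≤ penalized φ L 0 x m) → ‖m‖ ≤ ‖w‖ → m = w := by
  obtain ⟨m₀, hm₀⟩ := exists_forall_penalized_le hφ hlim hx₀ hL le_rfl x
  obtain ⟨v, hv⟩ := exists_penalized_eq_coe hTop hx₀ hm₀
  have hmax : ∀ m, (∀ y, penalized φ L 0 x y ≤ penalized φ L 0 x m) ↔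
      (v : EReal) ≤ penalized φ L 0 x m := fun m =>
    ⟨fun hm => hv ▸ hm m₀, fun hm y => (hm₀ y).trans (hv.trans_le hm)⟩
  obtain ⟨w, hwM, hw⟩ := (isCompact_superlevel_penalized hφ hlim hL le_rfl
    (EReal.bot_lt_coe v)).exists_isMinOn ⟨m₀, hv.ge⟩ continuous_norm.continuousOn
  refine ⟨w, (hmax w).2 hwM, fun m hm hmw => ?_⟩
  have hvm : penalized φ L 0 x m = v := le_antisymm (hv ▸ hm₀ m) ((hmax m).1 hm)
  have hvw : penalized φ L 0 x w = v := le_antisymm (hv ▸ hm₀ w) hwM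
  have hmid : ‖w‖ ≤ ‖(2⁻¹ : ℝ) • (m + w)‖ := hw <| by
    simpa only [mem_ofPred_eq, zero_mul, zero_div, add_zero] using
      coe_add_le_penalized_two_inv_smul_add hconc hL hvm hvw
  have hsq := norm_two_inv_smul_add_sq m w
  have : ‖m - w‖ ^ 2 ≤ 0 := by
    nlinarith [norm_nonneg w, norm_nonneg m, norm_nonneg ((2⁻¹ : ℝ) • (m + w))]
  simpa [sub_eq_zero] using this

end Selection

section Limit

variable {E : Type*} [NormedAddCommGroup E] {φ : E → EReal} {L ε : ℝ} {x x₀ m w : E}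

theorem norm_le_of_penalized_le (hTop : ∀ y, φ y ≠ ⊤) (hw : φ w ≠ ⊥) (hε : 0 < ε)
    (hmw : penalized φ L 0 x m ≤ penalized φ L 0 x w)
    (hwm : penalized φ L ε x w ≤ penalized φ L ε x m) : ‖m‖ ≤ ‖w‖ := by
  have hm : φ m ≠ ⊥ := penalized_ne_bot_iff.1 (ne_bot_of_le_ne_bot (penalized_ne_bot_iff.2 hw) hwm)
  rw [penalized_of_eq_coe (EReal.coe_toReal (hTop m) hm).symm,
    penalized_of_eq_coe (EReal.coe_toReal (hTop w) hw).symm, EReal.coe_le_coe_iff] at hmw hwm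
  have : ‖m‖ ^ 2 ≤ ‖w‖ ^ 2 := le_of_mul_le_mul_left (by linarith) hε
  exact pow_le_pow_iff_left₀ (norm_nonneg _) (norm_nonneg _) two_ne_zero |>.1 this

theorem tendsto_of_forall_penalized_le (hTop : ∀ y, φ y ≠ ⊤) (hx₀ : φ x₀ ≠ ⊥)
    (hφ : UpperSemicontinuous φ) (hlim : Tendsto φ (cocompact E) (𝓝 ⊥)) (hL : 0 ≤ L)
    {ε : ℕ → ℝ} (hεpos : ∀ n, 0 < ε n) (hε : Tendsto ε atTop (𝓝 0)) {Y : ℕ → E}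
    (hY : ∀ n y, penalized φ L (ε n) x y ≤ penalized φ L (ε n) x (Y n))
    (hw : ∀ y, penalized φ L 0 x y ≤ penalized φ L 0 x w)
    (hw_uniq : ∀ m, (∀ y, penalized φ L 0 x y ≤ penalized φ L 0 x m) → ‖m‖ ≤ ‖w‖ → m = w) :
    Tendsto Y atTop (𝓝 w) := by
  have hwb : φ w ≠ ⊥ := penalized_ne_bot_iff.1
    (ne_bot_of_le_ne_bot (penalized_ne_bot_iff.2 hx₀) (hw x₀))
  refine tendsto_of_eventually_forall_le (F := fun ε => penalized φ L ε x) hφ hlim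
    ((hφ.comp continuous_snd).sub_coe (by fun_prop))
    (fun z => (EReal.continuous_const_sub_coe _ (by fun_prop)).lowerSemicontinuous) hε
    (penalized_ne_bot_iff.2 hx₀ : penalized φ L 0 x x₀ ≠ ⊥) (Eventually.of_forall hY)
    (Eventually.of_forall fun n => penalized_le hL (hεpos n).le)
    (Metric.isClosed_closedBall (x := 0) (ε := ‖w‖)) (Eventually.of_forall fun n => ?_)
    fun m hm hmax => hw_uniq m hmax (mem_closedBall_zero_iff.1 hm)
  simpa using norm_le_of_penalized_le hTop hwb (hεpos n) (hw _) (hY n w)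

end Limit

/-- a Borel measurable selection of maximizers for the Lipschitz
majorization. -/
theorem stmt16 (d : ℕ) (φ : Euc d → EReal) (hφ : MemPhi d φ) (L : ℝ) (hL : 0 < L) :
    ∃ Y : Euc d → Euc d, Measurable Y ∧ ∀ x : Euc d,
      φ (Y x) - ((L * ‖x - Y x‖ : ℝ) : EReal)
        = ⨆ y : Euc d, (φ y - ((L * ‖x - y‖ : ℝ) : EReal)) := by
  obtain ⟨hTop, ⟨x₀, hx₀⟩, husc, hlim, hconc⟩ := hφ
  have hεpos (n : ℕ) : (0 : ℝ) < 1 / ((n : ℝ) + 1) := Nat.one_div_pos_of_nat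
  choose Yn hYn using fun (n : ℕ) =>
    exists_forall_penalized_le husc hlim hx₀ hL.le (hεpos n).le
  choose Y hYmax hYuniq using exists_min_norm_maximizer hTop hx₀ husc hlim hconc hL.le
  have hYn_cont (n : ℕ) : Continuous (Yn n) :=
    continuous_of_forall_penalized_le hTop hx₀ husc hlim hconc hL.le (hεpos n) (hYn n)
  have hYn_tendsto (x : Euc d) : Tendsto (Yn · x) atTop (𝓝 (Y x)) :=
    tendsto_of_forall_penalized_le hTop hx₀ husc hlim hL.le hεpos
      tendsto_one_div_add_atTop_nhds_zero_nat (fun n => hYn n x) (hYmax x) (hYuniq x)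
  refine ⟨Y, measurable_of_tendsto_metrizable (fun n => (hYn_cont n).measurable)
    (tendsto_pi_nhds.2 hYn_tendsto), fun x => ?_⟩
  simp only [← penalized_zero]
  exact le_antisymm (le_iSup (penalized φ L 0 x) (Y x)) (iSup_le (hYmax x))

end
end

section
/- Let C ⊆ ℝ^d be a compact convex set with non-empty interior, and for δ > 0 let Nbd(C, δ) := {x ∈ ℝ^d : dist(x, C) ≤ δ}, where dist(x, C) := min_{y∈C} ‖x − y‖. Then the function δ ↦ Leb_d(Nbd(C, δ) \ C) / δ is non-decreasing on (0, ∞), where Leb_d denotes d-dimensional Lebesgue measure. -/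
/-!
Let `f δ` be the volume of `{x | 0 < dist(x, C) ≤ δ}`. Pushing a point outside `C` a distance `c`
along its outward normal `(x - π x) / ‖x - π x‖`, where `π` is the nearest-point map onto `C`,
raises its distance to `C` by exactly `c`; and the push does not decrease distances, because the
normal field is monotone. So `{a < dist ≤ b}` has no more volume than `{a + c < dist ≤ b + c}`:
the increments `f b - f a` grow when `[a, b]` is translated to the right. Together with `f 0 = 0`
this makes the slopes `f (k h) / (k h)` nondecreasing in `k ∈ ℕ` for every `h > 0`, and the
right-continuity of `f` passes from the grids `h ℕ` to all of `(0, ∞)`.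
-/

open MeasureTheory

noncomputable section

open Metric Set Filter Topology Module
open scoped InnerProductSpace ENNReal

section AddHaar

variable {E : Type*} [NormedAddCommGroup E] [NormedSpace ℝ E] [FiniteDimensional ℝ E]
  [MeasurableSpace E] [BorelSpace E] (μ : Measure E) [μ.IsAddHaarMeasure]

theorem LipschitzOnWith.addHaar_image_le {f : E → E} {s : Set E} (hf : LipschitzOnWith 1 f s) :
    μ (f '' s) ≤ μ s := by
  rw [μ.isAddLeftInvariant_eq_smul μH[finrank ℝ E]]
  simpa using mul_le_mul_right (hf.hausdorffMeasure_image_le (Nat.cast_nonneg _)) _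

theorem addHaar_le_addHaar_image_of_dist_le {f : E → E} {s : Set E}
    (hf : ∀ x ∈ s, ∀ y ∈ s, dist x y ≤ dist (f x) (f y)) : μ s ≤ μ (f '' s) := by
  have hinj : InjOn f s := fun x hx y hy hxy =>
    dist_le_zero.1 <| (hf x hx y hy).trans_eq (by rw [hxy, dist_self])
  have hlip : LipschitzOnWith 1 (Function.invFunOn f s) (f '' s) := by
    refine LipschitzOnWith.of_dist_le_mul ?_
    rintro _ ⟨x, hx, rfl⟩ _ ⟨y, hy, rfl⟩
    rw [NNReal.coe_one, one_mul, hinj.leftInvOn_invFunOn hx, hinj.leftInvOn_invFunOn hy]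
    exact hf x hx y hy
  calc μ s = μ (Function.invFunOn f s '' (f '' s)) := by rw [hinj.invFunOn_image subset_rfl]
    _ ≤ μ (f '' s) := hlip.addHaar_image_le μ

end AddHaar

section MetricProjection

variable {F : Type*} [NormedAddCommGroup F] [InnerProductSpace ℝ F] {C : Set F} {p : F → F}

def IsMetricProjection (C : Set F) (p : F → F) : Prop :=
  ∀ x, p x ∈ C ∧ ∀ z ∈ C, ⟪x - p x, z - p x⟫_ℝ ≤ 0

theorem exists_isMetricProjection (hC : IsComplete C) (hCc : Convex ℝ C) (hne : C.Nonempty) :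
    ∃ p, IsMetricProjection C p := by
  choose p hpC hp using exists_norm_eq_iInf_of_complete_convex hne hC hCc
  exact ⟨p, fun x => ⟨hpC x, (norm_eq_iInf_iff_real_inner_le_zero hCc (hpC x)).1 (hp x)⟩⟩

def outwardNormal (p : F → F) (x : F) : F := ‖x - p x‖⁻¹ • (x - p x)

namespace IsMetricProjection

variable (hp : IsMetricProjection C p)
include hp

theorem norm_sub_apply_le (x : F) {z : F} (hz : z ∈ C) : ‖x - p x‖ ≤ ‖x - z‖ := by
  have hxz : x - z = (x - p x) - (z - p x) := by abel
  have hsq : ‖x - p x‖ ^ 2 ≤ ‖x - z‖ ^ 2 := by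
    rw [hxz, norm_sub_sq_real (x - p x)]
    nlinarith [(hp x).2 z hz, sq_nonneg ‖z - p x‖]
  exact (pow_le_pow_iff_left₀ (norm_nonneg _) (norm_nonneg _) two_ne_zero).1 hsq

theorem norm_sub_eq_infDist (x : F) : ‖x - p x‖ = infDist x C := by
  refine le_antisymm ((le_infDist ⟨_, (hp x).1⟩).2 fun z hz => ?_) ?_
  · rw [dist_eq_norm]; exact hp.norm_sub_apply_le x hz
  · rw [← dist_eq_norm]; exact infDist_le_dist_of_mem (hp x).1

theorem apply_eq_of_inner_le_zero {x y : F} (hy : y ∈ C) (h : ∀ z ∈ C, ⟪x - y, z - y⟫_ℝ ≤ 0) :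
    p x = y := by
  have hsq : ‖y - p x‖ ^ 2 = ⟪x - p x, y - p x⟫_ℝ + ⟪x - y, p x - y⟫_ℝ := by
    rw [← real_inner_self_eq_norm_sq, show p x - y = -(y - p x) by abel, inner_neg_right,
      ← sub_eq_add_neg, ← inner_sub_left, sub_sub_sub_cancel_left]
  have : ‖y - p x‖ ^ 2 ≤ 0 := by linarith [(hp x).2 y hy, h (p x) (hp x).1]
  rw [eq_comm, ← sub_eq_zero, ← norm_eq_zero]
  exact (sq_nonpos_iff _).1 this

theorem apply_add_smul (x : F) {t : ℝ} (ht : 0 ≤ t) : p (p x + t • (x - p x)) = p x :=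
  hp.apply_eq_of_inner_le_zero (hp x).1 fun z hz => by
    rw [add_sub_cancel_left, real_inner_smul_left]
    exact mul_nonpos_of_nonneg_of_nonpos ht ((hp x).2 z hz)

theorem infDist_add_smul (x : F) {t : ℝ} (ht : 0 ≤ t) :
    infDist (p x + t • (x - p x)) C = t * infDist x C := by
  rw [← hp.norm_sub_eq_infDist, hp.apply_add_smul x ht, add_sub_cancel_left, norm_smul,
    Real.norm_of_nonneg ht, hp.norm_sub_eq_infDist]

theorem infDist_add_smul_outwardNormal {x : F} (hx : 0 < infDist x C) {c : ℝ} (hc : 0 ≤ c) :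
    infDist (x + c • outwardNormal p x) C = infDist x C + c := by
  rw [← hp.norm_sub_eq_infDist] at hx
  have hray : x + c • outwardNormal p x = p x + (1 + c / ‖x - p x‖) • (x - p x) := by
    rw [outwardNormal, smul_smul, add_smul, one_smul, div_eq_mul_inv]; abel
  rw [hray, hp.infDist_add_smul x (by positivity), ← hp.norm_sub_eq_infDist]
  field_simp

-- `outwardNormal p x` is a subgradient at `x` of the convex function `infDist · C`.
theorem inner_sub_le_mul (x y : F) :
    ⟪x - p x, y - x⟫_ℝ ≤ ‖x - p x‖ * (‖y - p y‖ - ‖x - p x‖) := by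
  have hsplit : ⟪x - p x, y - x⟫_ℝ =
      ⟪x - p x, y - p y⟫_ℝ + ⟪x - p x, p y - p x⟫_ℝ - ‖x - p x‖ ^ 2 := by
    rw [← real_inner_self_eq_norm_sq, ← inner_add_right, ← inner_sub_right]
    congr 1; abel
  rw [hsplit]
  nlinarith [real_inner_le_norm (x - p x) (y - p y), (hp x).2 (p y) (hp y).1]

theorem inner_outwardNormal_sub_nonneg {x y : F} (hx : 0 < infDist x C) (hy : 0 < infDist y C) :
    0 ≤ ⟪outwardNormal p x - outwardNormal p y, x - y⟫_ℝ := by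
  rw [← hp.norm_sub_eq_infDist] at hx hy
  have h₁ : ‖x - p x‖ - ‖y - p y‖ ≤ ‖x - p x‖⁻¹ * ⟪x - p x, x - y⟫_ℝ := by
    have h := hp.inner_sub_le_mul x y
    rw [← neg_sub x y, inner_neg_right] at h
    rw [le_inv_mul_iff₀ hx]; nlinarith
  have h₂ : ‖y - p y‖⁻¹ * ⟪y - p y, x - y⟫_ℝ ≤ ‖x - p x‖ - ‖y - p y‖ := by
    rw [inv_mul_le_iff₀ hy]; nlinarith [hp.inner_sub_le_mul y x]
  rw [outwardNormal, outwardNormal, inner_sub_left, real_inner_smul_left, real_inner_smul_left]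
  linarith

theorem norm_sub_le_norm_add_smul_outwardNormal {x y : F} (hx : 0 < infDist x C)
    (hy : 0 < infDist y C) {c : ℝ} (hc : 0 ≤ c) :
    ‖x - y‖ ≤ ‖(x + c • outwardNormal p x) - (y + c • outwardNormal p y)‖ := by
  have hsum : (x + c • outwardNormal p x) - (y + c • outwardNormal p y) =
      (x - y) + c • (outwardNormal p x - outwardNormal p y) := by
    rw [smul_sub]; abel
  have hmono := hp.inner_outwardNormal_sub_nonneg hx hy
  rw [hsum]
  refine (pow_le_pow_iff_left₀ (norm_nonneg _) (norm_nonneg _) two_ne_zero).1 ?_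
  rw [norm_add_sq_real, real_inner_smul_right, real_inner_comm]
  nlinarith [mul_nonneg hc hmono, sq_nonneg ‖c • (outwardNormal p x - outwardNormal p y)‖]

theorem addHaar_preimage_infDist_Ioc_le [FiniteDimensional ℝ F] [MeasurableSpace F]
    [BorelSpace F] (μ : Measure F) [μ.IsAddHaarMeasure] {a b c : ℝ} (ha : 0 ≤ a) (hc : 0 ≤ c) :
    μ ((infDist · C) ⁻¹' Ioc a b) ≤ μ ((infDist · C) ⁻¹' Ioc (a + c) (b + c)) := by
  set ψ : F → F := fun x => x + c • outwardNormal p x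
  calc μ ((infDist · C) ⁻¹' Ioc a b) ≤ μ (ψ '' ((infDist · C) ⁻¹' Ioc a b)) := by
        refine addHaar_le_addHaar_image_of_dist_le μ fun x hx y hy => ?_
        rw [dist_eq_norm, dist_eq_norm]
        exact hp.norm_sub_le_norm_add_smul_outwardNormal (ha.trans_lt hx.1) (ha.trans_lt hy.1) hc
    _ ≤ μ ((infDist · C) ⁻¹' Ioc (a + c) (b + c)) := by
        refine measure_mono ?_
        rintro _ ⟨x, ⟨hxa, hxb⟩, rfl⟩
        rw [mem_preimage, hp.infDist_add_smul_outwardNormal (ha.trans_lt hxa) hc]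
        exact ⟨by linarith, by linarith⟩

end IsMetricProjection

end MetricProjection

section PreimageIoc

variable {X : Type*} [MeasurableSpace X] {μ : Measure X} {g : X → ℝ}

theorem measureReal_preimage_Ioc_sub (hg : Measurable g) {a b c : ℝ} (hab : a ≤ b) (hbc : b ≤ c)
    (hfin : μ (g ⁻¹' Ioc a c) ≠ ∞) :
    μ.real (g ⁻¹' Ioc a c) - μ.real (g ⁻¹' Ioc a b) = μ.real (g ⁻¹' Ioc b c) := by
  have hsplit : g ⁻¹' Ioc a c = g ⁻¹' Ioc a b ∪ g ⁻¹' Ioc b c := by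
    rw [← preimage_union, Ioc_union_Ioc_eq_Ioc hab hbc]
  rw [hsplit] at hfin ⊢
  rw [measureReal_union ((Ioc_disjoint_Ioc_of_le le_rfl).preimage g) (hg measurableSet_Ioc)
    (measure_ne_top_of_subset subset_union_left hfin)
    (measure_ne_top_of_subset subset_union_right hfin)]
  ring

theorem continuousWithinAt_measureReal_preimage_Ioc (hg : Measurable g) (a t : ℝ)
    (hfin : ∀ b, μ (g ⁻¹' Ioc a b) ≠ ∞) :
    ContinuousWithinAt (fun b => μ.real (g ⁻¹' Ioc a b)) (Ici t) t := by
  rw [← continuousWithinAt_Ioi_iff_Ici]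
  have h := tendsto_measure_biInter_gt (μ := μ) (s := fun b => g ⁻¹' Ioc a b) (a := t)
    (fun r _ => (hg measurableSet_Ioc).nullMeasurableSet)
    (fun i j _ hij => preimage_mono (Ioc_subset_Ioc_right hij)) ⟨t + 1, by linarith, hfin _⟩
  have hinter : ⋂ r > t, g ⁻¹' Ioc a r = g ⁻¹' Ioc a t := by
    ext x
    simp only [mem_iInter, mem_preimage, mem_Ioc]
    exact ⟨fun h => ⟨(h (t + 1) (by linarith)).1,
      le_of_forall_gt_imp_ge_of_dense fun r hr => (h r hr).2⟩, fun h r hr => ⟨h.1, h.2.trans hr.le⟩⟩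
  rw [hinter] at h
  exact (ENNReal.tendsto_toReal (hfin t)).comp h

end PreimageIoc

theorem div_le_div_of_monotone_sub {M : ℕ → ℝ} (h0 : M 0 = 0)
    (hM : Monotone fun k => M (k + 1) - M k) {i j : ℕ} (hi : 0 < i) (hij : i ≤ j) :
    M i / i ≤ M j / j := by
  have hstep : ∀ k ≥ 1, M k / k ≤ M (k + 1) / ↑(k + 1) := by
    intro k hk
    have hsum : M k ≤ k * (M (k + 1) - M k) :=
      calc M k = ∑ l ∈ Finset.range k, (M (l + 1) - M l) := by
            rw [Finset.sum_range_sub, h0, sub_zero]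
        _ ≤ (Finset.range k).card • (M (k + 1) - M k) :=
            Finset.sum_le_card_nsmul _ _ _ fun l hl => hM (Finset.mem_range.1 hl).le
        _ = k * (M (k + 1) - M k) := by rw [Finset.card_range, nsmul_eq_mul]
    rw [div_le_div_iff₀ (by positivity) (by positivity)]
    push_cast
    linarith
  exact monotoneOn_nat_Ici_of_le_succ hstep hi (hi.trans_le hij) hij

theorem div_le_div_natCast_mul_of_sub_le_sub {f : ℝ → ℝ} (h0 : f 0 = 0)
    (hf : ∀ a b c, 0 ≤ a → a ≤ b → 0 ≤ c → f b - f a ≤ f (b + c) - f (a + c))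
    {h : ℝ} (hh : 0 < h) {i j : ℕ} (hi : 0 < i) (hij : i ≤ j) :
    f (i * h) / (i * h) ≤ f (j * h) / (j * h) := by
  have hM : Monotone fun k : ℕ => f ((k + 1 : ℕ) * h) - f (k * h) :=
    monotone_nat_of_le_succ fun k => by
      have := hf (k * h) ((k + 1) * h) h (by positivity) (by nlinarith) hh.le
      push_cast
      simpa only [add_mul, one_mul] using this
  have := div_le_div_of_nonneg_right
    (div_le_div_of_monotone_sub (M := fun k : ℕ => f (k * h)) (by simp [h0]) hM hi hij) hh.le
  rwa [div_div, div_div] at this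

theorem tendsto_natCeil_mul_div_mul_div_nhdsGE {s t : ℝ} (hs : 0 < s) (ht : 0 ≤ t) :
    Tendsto (fun n : ℕ => (⌈n * t / s⌉₊ : ℝ) * (s / n)) atTop (𝓝[≥] t) := by
  have hbounds : ∀ n : ℕ, 0 < n →
      t ≤ ⌈n * t / s⌉₊ * (s / n) ∧ ⌈n * t / s⌉₊ * (s / n) ≤ t + s / n := by
    intro n hn
    have hh : 0 < s / n := by positivity
    have e : n * t / s * (s / n) = t := by field_simp
    constructor
    · calc t = n * t / s * (s / n) := e.symm
        _ ≤ ⌈n * t / s⌉₊ * (s / n) := mul_le_mul_of_nonneg_right (Nat.le_ceil _) hh.le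
    · calc (⌈n * t / s⌉₊ : ℝ) * (s / n) ≤ (n * t / s + 1) * (s / n) :=
            mul_le_mul_of_nonneg_right (Nat.ceil_lt_add_one (by positivity)).le hh.le
        _ = t + s / n := by rw [add_mul, e, one_mul]
  have hbounds' := (eventually_gt_atTop 0).mono hbounds
  refine tendsto_nhdsWithin_iff.2 ⟨?_, hbounds'.mono fun n h => h.1⟩
  refine tendsto_of_tendsto_of_tendsto_of_le_of_le' tendsto_const_nhds ?_
    (hbounds'.mono fun n h => h.1) (hbounds'.mono fun n h => h.2)
  simpa using (tendsto_const_div_atTop_nhds_zero_nat s).const_add t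

theorem monotoneOn_div_of_sub_le_sub {f : ℝ → ℝ} (h0 : f 0 = 0)
    (hf : ∀ a b c, 0 ≤ a → a ≤ b → 0 ≤ c → f b - f a ≤ f (b + c) - f (a + c))
    (hcont : ∀ t > 0, ContinuousWithinAt f (Ici t) t) :
    MonotoneOn (fun t => f t / t) (Ioi 0) := by
  intro s (hs : 0 < s) t (ht : 0 < t) hst
  have hslope : ContinuousWithinAt (fun t => f t / t) (Ici t) t :=
    (hcont t ht).div continuousWithinAt_id ht.ne'
  refine ge_of_tendsto (hslope.tendsto.comp (tendsto_natCeil_mul_div_mul_div_nhdsGE hs ht.le)) ?_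
  filter_upwards [eventually_gt_atTop 0] with n hn
  have hn_le : n ≤ ⌈n * t / s⌉₊ := by
    have : (n : ℝ) ≤ n * t / s := by
      rw [le_div_iff₀ hs]; exact mul_le_mul_of_nonneg_left hst n.cast_nonneg
    exact Nat.cast_le.1 (this.trans (Nat.le_ceil _))
  have h := div_le_div_natCast_mul_of_sub_le_sub h0 hf (by positivity : 0 < s / n) hn hn_le
  rwa [mul_div_cancel₀ s (Nat.cast_ne_zero.2 hn.ne')] at h

/-- for a compact convex set `C` with non-empty interior, the
normalized volume of the `δ`-neighborhood shell `Nbd(C,δ) \ C` is a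
non-decreasing function of `δ > 0`. -/
theorem stmt17 (d : ℕ) (C : Set (Euc d)) (hC1 : IsCompact C) (hC2 : Convex ℝ C)
    (hC3 : (interior C).Nonempty) :
    MonotoneOn
      (fun δ : ℝ => (volume ({x : Euc d | Metric.infDist x C ≤ δ} \ C)).toReal / δ)
      (Set.Ioi (0 : ℝ)) := by
  have hne : C.Nonempty := hC3.mono interior_subset
  obtain ⟨p, hp⟩ := exists_isMetricProjection hC1.isComplete hC2 hne
  have hg : Measurable (infDist · C) := (continuous_infDist_pt C).measurable
  have hfin : ∀ a b, volume ((infDist · C) ⁻¹' Ioc a b) ≠ ∞ := fun a b =>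
    measure_ne_top_of_subset (fun x hx => (mem_thickening_iff_infDist_lt hne).2 (hx.2.trans_lt
      (lt_add_one b))) (hC1.isBounded.thickening.measure_lt_top).ne
  have hshell : ∀ δ, {x | infDist x C ≤ δ} \ C = (infDist · C) ⁻¹' Ioc 0 δ := fun δ => by
    ext x
    rw [Set.mem_sdiff, hC1.isClosed.notMem_iff_infDist_pos hne]
    exact and_comm
  simp only [hshell]
  refine monotoneOn_div_of_sub_le_sub (f := fun δ => volume.real ((infDist · C) ⁻¹' Ioc 0 δ))
    (by simp) (fun a b c ha hab hc => ?_)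
    (fun t _ => continuousWithinAt_measureReal_preimage_Ioc hg 0 t (hfin 0))
  rw [measureReal_preimage_Ioc_sub hg ha hab (hfin _ _),
    measureReal_preimage_Ioc_sub hg (by linarith) (by linarith) (hfin _ _)]
  exact ENNReal.toReal_mono (hfin _ _) (hp.addHaar_preimage_infDist_Ioc_le volume ha hc)
end
end

section
/- For every integer d ≥ 1 there exists a constant h_d ≥ 0, depending only on d, such that for every P ∈ 𝒫_d and every log-concave projection f of P, writing φ := log f and M_φ := sup_{x ∈ ℝ^d} φ(x): ∫ φ dP ≥ M_φ − h_d. -/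
/-!
If `f` is a log-concave projection of `P` and `f x₀ > 0`, then
`g x = 2⁻ᵈ f ((x₀ + x) / 2)` is again a log-concave density, and midpoint log-concavity gives
`log g ≥ -d log 2 + (log f x₀ + log f) / 2`. Optimality of `f` yields
`∫ log f dP ≥ ∫ log g dP ≥ -d log 2 + (log f x₀ + ∫ log f dP) / 2`, i.e.
`∫ log f dP ≥ log f x₀ - 2 d log 2`. Dividing by two requires `∫ log f dP` to be finite: it is
`> -∞` by comparison with the Laplace density `∝ exp (-‖x‖)`, whose logarithm is
`P`-integrable because `P` has a first moment.
-/

open MeasureTheory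
open scoped ENNReal RealInnerProductSpace

noncomputable section

/-- `log t`, valued in `[−∞,∞)` with `log 0 = −∞`. -/
def eLog (t : ℝ) : EReal := if t = 0 then ⊥ else ((Real.log t : ℝ) : EReal)

section LogIntegral

variable {α : Type*} [MeasurableSpace α] {μ : Measure α}

lemma coe_integral_eq_lintegral_sub_lintegral {w : α → ℝ} (hw : Integrable w μ) :
    ((∫ x, w x ∂μ : ℝ) : EReal) =
      ((∫⁻ x, ENNReal.ofReal (w x) ∂μ : ℝ≥0∞) : EReal) -
        ((∫⁻ x, ENNReal.ofReal (-w x) ∂μ : ℝ≥0∞) : EReal) := by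
  have hneg : ∫⁻ x, ENNReal.ofReal (-w x) ∂μ ≠ ⊤ := hw.neg.lintegral_lt_top.ne
  rw [integral_eq_lintegral_pos_part_sub_lintegral_neg_part hw, EReal.coe_sub,
    EReal.coe_ennreal_toReal hw.lintegral_lt_top.ne, EReal.coe_ennreal_toReal hneg]

lemma integrable_of_lintegral_ofReal_ne_top {w : α → ℝ} (hw : AEMeasurable w μ)
    (hpos : ∫⁻ x, ENNReal.ofReal (w x) ∂μ ≠ ⊤) (hneg : ∫⁻ x, ENNReal.ofReal (-w x) ∂μ ≠ ⊤) :
    Integrable w μ := by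
  refine ⟨hw.aestronglyMeasurable, ?_⟩
  have hsplit : ∀ x, ‖w x‖ₑ = ENNReal.ofReal (w x) + ENNReal.ofReal (-w x) := fun x => by
    rw [Real.enorm_eq_ofReal_abs]
    rcases le_total 0 (w x) with h | h
    · rw [abs_of_nonneg h, ENNReal.ofReal_of_nonpos (neg_nonpos.2 h), add_zero]
    · rw [abs_of_nonpos h, ENNReal.ofReal_of_nonpos h, zero_add]
  show ∫⁻ x, ‖w x‖ₑ ∂μ < ⊤
  simp_rw [hsplit]
  rw [lintegral_add_left' hw.ennreal_ofReal]
  exact ENNReal.add_lt_top.2 ⟨hpos.lt_top, hneg.lt_top⟩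

end LogIntegral

lemma measurable_logNegPart : Measurable logNegPart :=
  Measurable.ite (measurableSet_singleton 0) measurable_const
    (ENNReal.measurable_ofReal.comp Real.measurable_log.neg)

lemma logNegPart_of_ne_zero {t : ℝ} (ht : t ≠ 0) :
    logNegPart t = ENNReal.ofReal (-Real.log t) := if_neg ht

lemma eLog_le_coe {t r : ℝ} (ht : 0 ≤ t) (h : 0 < t → Real.log t ≤ r) : eLog t ≤ r := by
  rcases ht.eq_or_lt with rfl | ht
  · simp [eLog]
  · rw [eLog, if_neg ht.ne']; exact EReal.coe_le_coe_iff.2 (h ht)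

section ELogInt

variable {d : ℕ} {P : Measure (Euc d)} {u : Euc d → ℝ}

lemma lintegral_logNegPart_eq (hpos : ∀ᵐ x ∂P, 0 < u x) :
    ∫⁻ x, logNegPart (u x) ∂P = ∫⁻ x, ENNReal.ofReal (-Real.log (u x)) ∂P :=
  lintegral_congr_ae (hpos.mono fun _ hx => logNegPart_of_ne_zero hx.ne')

lemma eLogInt_eq_integral (hpos : ∀ᵐ x ∂P, 0 < u x)
    (hint : Integrable (fun x => Real.log (u x)) P) :
    eLogInt d P u = ((∫ x, Real.log (u x) ∂P : ℝ) : EReal) := by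
  rw [eLogInt, lintegral_logNegPart_eq hpos, coe_integral_eq_lintegral_sub_lintegral hint]
  rfl

lemma coe_integral_le_eLogInt {w : Euc d → ℝ} (hw : Integrable w P)
    (h : ∀ᵐ x ∂P, 0 < u x ∧ w x ≤ Real.log (u x)) :
    ((∫ x, w x ∂P : ℝ) : EReal) ≤ eLogInt d P u := by
  rw [coe_integral_eq_lintegral_sub_lintegral hw]
  refine EReal.sub_le_sub (EReal.coe_ennreal_le_coe_ennreal_iff.2 ?_)
    (EReal.coe_ennreal_le_coe_ennreal_iff.2 ?_)
  · exact lintegral_mono_ae (h.mono fun x hx => ENNReal.ofReal_le_ofReal hx.2)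
  · refine lintegral_mono_ae (h.mono fun x hx => ?_)
    rw [logNegPart_of_ne_zero hx.1.ne']
    exact ENNReal.ofReal_le_ofReal (neg_le_neg hx.2)

lemma lintegral_logNegPart_ne_top (h : eLogInt d P u ≠ ⊥) : ∫⁻ x, logNegPart (u x) ∂P ≠ ⊤ := by
  intro htop
  rw [eLogInt, htop, EReal.coe_ennreal_top, EReal.sub_top] at h
  exact h rfl

lemma ae_pos_of_eLogInt_ne_bot (hu : Measurable u) (hnn : ∀ x, 0 ≤ u x)
    (h : eLogInt d P u ≠ ⊥) : ∀ᵐ x ∂P, 0 < u x := by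
  filter_upwards [ae_lt_top (measurable_logNegPart.comp hu) (lintegral_logNegPart_ne_top h)]
    with x hx
  refine (hnn x).lt_of_ne fun h0 => ?_
  rw [Function.comp_apply, ← h0, logNegPart, if_pos rfl] at hx
  exact hx.ne rfl

lemma integrable_log_of_eLogInt_ne_top (hu : Measurable u) (hpos : ∀ᵐ x ∂P, 0 < u x)
    (hbot : eLogInt d P u ≠ ⊥) (htop : eLogInt d P u ≠ ⊤) :
    Integrable (fun x => Real.log (u x)) P := by
  have hneg := lintegral_logNegPart_ne_top hbot
  refine integrable_of_lintegral_ofReal_ne_top (Real.measurable_log.comp hu).aemeasurable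
    (fun hpos' => htop ?_) (lintegral_logNegPart_eq hpos ▸ hneg)
  simp only [eLogInt, logPosPart]
  rw [hpos', EReal.coe_ennreal_top,
    ← EReal.coe_ennreal_toReal hneg, EReal.top_sub_coe]

end ELogInt

-- The unit ball has volume `(∫ exp (-‖x‖)) / Γ (dim + 1)`, and open sets have positive measure.
lemma integral_exp_neg_norm_pos {E : Type*} [NormedAddCommGroup E] [NormedSpace ℝ E]
    [FiniteDimensional ℝ E] [MeasurableSpace E] [BorelSpace E] (μ : Measure E)
    [μ.IsAddHaarMeasure] : 0 < ∫ x, Real.exp (-‖x‖) ∂μ := by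
  have hball : 0 < μ (Metric.ball 0 1) := Metric.measure_ball_pos _ _ one_pos
  rw [measure_unitBall_eq_integral_div_gamma μ one_pos, ENNReal.ofReal_pos,
    div_pos_iff_of_pos_right (Real.Gamma_pos_of_pos (by positivity))] at hball
  simpa using hball

lemma mul_rpow_mul_mul_rpow {c a b t : ℝ} (hc : 0 ≤ c) (ha : 0 ≤ a) (hb : 0 ≤ b) :
    (c * a) ^ (1 - t) * (c * b) ^ t = c * (a ^ (1 - t) * b ^ t) := by
  rw [Real.mul_rpow hc ha, Real.mul_rpow hc hb, mul_mul_mul_comm,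
    ← Real.rpow_add' hc (by norm_num), sub_add_cancel, Real.rpow_one]

namespace MemF

variable {d : ℕ} {f : Euc d → ℝ}

lemma pos_and_log_le (hf : MemF d f) {x y : Euc d} (hx : 0 < f x) (hy : 0 < f y) {t : ℝ}
    (ht₀ : 0 ≤ t) (ht₁ : t ≤ 1) :
    0 < f ((1 - t) • x + t • y) ∧
      (1 - t) * Real.log (f x) + t * Real.log (f y) ≤ Real.log (f ((1 - t) • x + t • y)) := by
  have hprod : 0 < f x ^ (1 - t) * f y ^ t := by positivity
  have hlc := hf.2.2.2 x y t ht₀ ht₁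
  refine ⟨hprod.trans_le hlc, ?_⟩
  calc (1 - t) * Real.log (f x) + t * Real.log (f y)
      = Real.log (f x ^ (1 - t) * f y ^ t) := by
        rw [Real.log_mul (by positivity) (by positivity), Real.log_rpow hx, Real.log_rpow hy]
    _ ≤ _ := Real.log_le_log hprod hlc

lemma comp_homothety (hf : MemF d f) (a : Euc d) {c : ℝ} (hc : c ≠ 0) :
    MemF d (fun x => |c| ^ d * f (a + c • x)) := by
  obtain ⟨husc, hnn, hone, hlc⟩ := hf
  have hc' : 0 ≤ |c| ^ d := by positivity
  refine ⟨?_, fun x => mul_nonneg hc' (hnn _), ?_, fun x y t ht₀ ht₁ => ?_⟩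
  · exact (continuous_const_mul _).comp_upperSemicontinuous
      (husc.comp (g := fun x => a + c • x) (by fun_prop)) (monotone_mul_left_of_nonneg hc')
  · rw [integral_const_mul, Measure.integral_comp_smul volume (fun y => f (a + y)),
      integral_add_left_eq_self f a, hone, finrank_euclideanSpace_fin, smul_eq_mul, mul_one,
      ← inv_pow, abs_pow, abs_inv, inv_pow, mul_inv_cancel₀ (by positivity)]
  · have hpt : (1 - t) • (a + c • x) + t • (a + c • y) = a + c • ((1 - t) • x + t • y) := by
      module
    rw [mul_rpow_mul_mul_rpow hc' (hnn _) (hnn _)]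
    exact mul_le_mul_of_nonneg_left (hpt ▸ hlc _ _ t ht₀ ht₁) hc'

end MemF

def laplaceDensity (d : ℕ) (x : Euc d) : ℝ :=
  (∫ y : Euc d, Real.exp (-‖y‖))⁻¹ * Real.exp (-‖x‖)

lemma laplaceDensity_pos (d : ℕ) (x : Euc d) : 0 < laplaceDensity d x := by
  have hI := integral_exp_neg_norm_pos (volume : Measure (Euc d))
  unfold laplaceDensity; positivity

lemma memF_laplaceDensity (d : ℕ) : MemF d (laplaceDensity d) := by
  have hI := integral_exp_neg_norm_pos (volume : Measure (Euc d))
  have hc : 0 ≤ (∫ y : Euc d, Real.exp (-‖y‖))⁻¹ := by positivity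
  refine ⟨(continuous_const.mul (by fun_prop)).upperSemicontinuous,
    fun x => (laplaceDensity_pos d x).le, ?_, fun x y t ht₀ ht₁ => ?_⟩
  · simp only [laplaceDensity]
    rw [integral_const_mul, inv_mul_cancel₀ hI.ne']
  · simp only [laplaceDensity]
    rw [mul_rpow_mul_mul_rpow hc (Real.exp_pos _).le (Real.exp_pos _).le,
      ← Real.exp_mul, ← Real.exp_mul, ← Real.exp_add]
    refine mul_le_mul_of_nonneg_left (Real.exp_le_exp.2 ?_) hc
    have := (convexOn_norm convex_univ).2 (Set.mem_univ x) (Set.mem_univ y)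
      (by linarith : 0 ≤ 1 - t) ht₀ (by ring)
    simp only [smul_eq_mul] at this
    linarith

lemma log_laplaceDensity (d : ℕ) (x : Euc d) :
    Real.log (laplaceDensity d x) = Real.log (∫ y : Euc d, Real.exp (-‖y‖))⁻¹ - ‖x‖ := by
  have hI := integral_exp_neg_norm_pos (volume : Measure (Euc d))
  rw [laplaceDensity, Real.log_mul (by positivity) (Real.exp_ne_zero _), Real.log_exp,
    sub_eq_add_neg]

lemma IsLCP.eLogInt_ne_bot {d : ℕ} {P : Measure (Euc d)} [IsFiniteMeasure P] {f : Euc d → ℝ}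
    (hP : Integrable (fun x : Euc d => ‖x‖) P) (hf : IsLCP d P f) : eLogInt d P f ≠ ⊥ := by
  have hlow := coe_integral_le_eLogInt (u := laplaceDensity d) ((integrable_const _).sub hP)
    (Filter.Eventually.of_forall fun x =>
      ⟨laplaceDensity_pos d x, (log_laplaceDensity d x).ge⟩)
  exact ne_bot_of_le_ne_bot (EReal.coe_ne_bot _) (hlow.trans (hf.2 _ (memF_laplaceDensity d)))

lemma IsLCP.log_le_integral_log_add {d : ℕ} {P : Measure (Euc d)} [IsProbabilityMeasure P]
    {f : Euc d → ℝ} (hf : IsLCP d P f) (hpos : ∀ᵐ x ∂P, 0 < f x)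
    (hint : Integrable (fun x => Real.log (f x)) P) {x₀ : Euc d} (hx₀ : 0 < f x₀) :
    Real.log (f x₀) ≤ ∫ x, Real.log (f x) ∂P + 2 * d * Real.log 2 := by
  set g : Euc d → ℝ := fun x => |(2 : ℝ)⁻¹| ^ d * f ((2⁻¹ : ℝ) • x₀ + (2⁻¹ : ℝ) • x) with hg
  set c : ℝ := -(d * Real.log 2) + Real.log (f x₀) / 2 with hc
  have hg_memF : MemF d g := hf.1.comp_homothety ((2⁻¹ : ℝ) • x₀) (inv_ne_zero two_ne_zero)
  have hlog_g : ∀ᵐ x ∂P, 0 < g x ∧ c + Real.log (f x) / 2 ≤ Real.log (g x) := by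
    filter_upwards [hpos] with x hx
    obtain ⟨hmid, hlog⟩ := hf.1.pos_and_log_le hx₀ hx (t := 2⁻¹) (by norm_num) (by norm_num)
    rw [show (1 - 2⁻¹ : ℝ) = 2⁻¹ by norm_num] at hmid hlog
    refine ⟨by positivity, ?_⟩
    rw [hg, Real.log_mul (by positivity) hmid.ne', Real.log_pow, abs_inv, abs_two, Real.log_inv]
    linarith
  have hw : Integrable (fun x => c + Real.log (f x) / 2) P :=
    (integrable_const c).add (hint.div_const 2)
  have hcompare := (coe_integral_le_eLogInt hw hlog_g).trans
    ((hf.2 g hg_memF).trans_eq (eLogInt_eq_integral hpos hint))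
  rw [EReal.coe_le_coe_iff, integral_add (integrable_const c) (hint.div_const 2), integral_const,
    integral_div, probReal_univ, one_smul] at hcompare
  linarith

theorem stmt19_general (d : ℕ) :
    ∃ h : ℝ, 0 ≤ h ∧
      ∀ P : Measure (Euc d), MemP d P → ∀ f : Euc d → ℝ, IsLCP d P f →
        (⨆ x : Euc d, eLog (f x)) - ((h : ℝ) : EReal) ≤ eLogInt d P f := by
  refine ⟨2 * d * Real.log 2, by positivity, fun P ⟨hprob, hmoment, _⟩ f hf => ?_⟩
  have hfm : Measurable f := hf.1.1.measurable
  have hbot := hf.eLogInt_ne_bot hmoment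
  rcases eq_or_ne (eLogInt d P f) ⊤ with htop | htop
  · exact htop ▸ le_top
  have hpos := ae_pos_of_eLogInt_ne_bot hfm hf.1.2.1 hbot
  have hint := integrable_log_of_eLogInt_ne_top hfm hpos hbot htop
  rw [eLogInt_eq_integral hpos hint, EReal.sub_le_iff_le_add (.inl (EReal.coe_ne_bot _))
    (.inl (EReal.coe_ne_top _)), ← EReal.coe_add]
  exact iSup_le fun x => eLog_le_coe (hf.1.2.1 x) (hf.log_le_integral_log_add hpos hint)

/-- `∫ φ dP ≥ M_φ − h_d` for `φ = log f`, with the integral valued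
in `[−∞,∞)`. -/
theorem stmt19 (d : ℕ) (hd : 1 ≤ d) :
    ∃ h : ℝ, 0 ≤ h ∧
      ∀ P : Measure (Euc d), MemP d P → ∀ f : Euc d → ℝ, IsLCP d P f →
        (⨆ x : Euc d, eLog (f x)) - ((h : ℝ) : EReal) ≤ eLogInt d P f :=
  stmt19_general d

end
end
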